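/- arXiv:1805.11991 — 2 statements merged into one kernel-verified Lean document; each statement's English description precedes it below -/
import Mathlib

section
/- Let K be a field of odd prime characteristic p and let f = Σ_{n=0}^{d} c_n Xⁿ be a polynomial over K of degree d ≥ 2 with p ∣ d and c_{d−1} ≠ 0. Set b = −c_{d−2}/((d−1)·c_{d−1}) (note d−1 is invertible in K since p ∣ d). Then the polynomial g(X) = f(X + b) has degree d, the same coefficients at X^d and X^{d−1} as f, and its coefficient of X^{d−2} is zero. -/
/-!
By Taylor expansion, the coefficients of `f(X + b)` at `X^(d-1)` and `X^(d-2)` are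
`c_{d-1} + d c_d b` and `c_{d-2} + (d-1) c_{d-1} b + C(d,2) c_d b²`. When `p ∣ d` and `p` is odd,
both `d` and `C(d,2) = d(d-1)/2` vanish in `K`, so the first is unchanged and the second is affine
in `b`, vanishing exactly at the chosen `b`.
-/

open Finset Polynomial

namespace Polynomial

section CommSemiring

variable {R : Type*} [CommSemiring R] (f : R[X]) (r : R) {k : ℕ}

theorem coeff_taylor_eq_sum_range {j : ℕ} (hj : f.natDegree ≤ k + j) :
    (taylor r f).coeff k =
      ∑ i ∈ range (j + 1), ((i + k).choose k : R) * f.coeff (i + k) * r ^ i := by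
  have hdeg : (hasseDeriv k f).natDegree < j + 1 :=
    (natDegree_hasseDeriv_le f k).trans_lt (by omega)
  simp only [taylor_coeff, eval_eq_sum_range' hdeg, hasseDeriv_coeff]

theorem coeff_taylor_of_natDegree_eq_add_one (hf : f.natDegree = k + 1) :
    (taylor r f).coeff k = f.coeff k + (k + 1 : ℕ) * f.coeff (k + 1) * r := by
  rw [coeff_taylor_eq_sum_range f r (j := 1) hf.le]
  simp [sum_range_succ, add_comm 1 k]

theorem coeff_taylor_of_natDegree_eq_add_two (hf : f.natDegree = k + 2) :
    (taylor r f).coeff k = f.coeff k + (k + 1 : ℕ) * f.coeff (k + 1) * r +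
      (k + 2).choose 2 * f.coeff (k + 2) * r ^ 2 := by
  rw [coeff_taylor_eq_sum_range f r (j := 2) hf.le]
  simp only [sum_range_succ, range_one, sum_singleton, zero_add, add_comm 1 k, add_comm 2 k,
    Nat.choose_self, Nat.choose_succ_self_right, Nat.cast_one, one_mul, pow_zero, mul_one, pow_one]
  rw [Nat.choose_symm_add]

end CommSemiring

theorem coeff_taylor_eq_zero_of_choose_two_eq_zero {K : Type*} [Field K] (f : K[X]) {k : ℕ}
    (hf : f.natDegree = k + 2) (hchoose : ((k + 2).choose 2 : K) = 0)
    (hc : ((k + 1 : ℕ) : K) * f.coeff (k + 1) ≠ 0) :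
    (taylor (-f.coeff k / (((k + 1 : ℕ) : K) * f.coeff (k + 1))) f).coeff k = 0 := by
  obtain ⟨hk, hc⟩ := mul_ne_zero_iff.mp hc
  rw [coeff_taylor_of_natDegree_eq_add_two f _ hf, hchoose]
  field_simp
  ring

end Polynomial

/-- Let `K` be a field of odd prime characteristic `p` and `f` a polynomial of degree
`d ≥ 2` with `p ∣ d` and `c_{d−1} ≠ 0`. With `b = −c_{d−2}/((d−1)·c_{d−1})`, the
polynomial `g(X) = f(X + b)` has degree `d`, the same coefficients at `X^d` and
`X^{d−1}` as `f`, and vanishing coefficient at `X^{d−2}`. -/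
theorem depress_degree_sub_two_coeff_char_dvd
    (K : Type*) [Field K] (p : ℕ) [Fact p.Prime] [CharP K p] (hp : p ≠ 2)
    (f : Polynomial K) (d : ℕ)
    (hd : f.natDegree = d) (hd2 : 2 ≤ d) (hpd : p ∣ d)
    (hc : f.coeff (d - 1) ≠ 0) :
    (f.comp (Polynomial.X + Polynomial.C (-(f.coeff (d - 2)) / (((d - 1 : ℕ) : K) * f.coeff (d - 1))))).natDegree = d ∧
    (f.comp (Polynomial.X + Polynomial.C (-(f.coeff (d - 2)) / (((d - 1 : ℕ) : K) * f.coeff (d - 1))))).coeff d = f.coeff d ∧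
    (f.comp (Polynomial.X + Polynomial.C (-(f.coeff (d - 2)) / (((d - 1 : ℕ) : K) * f.coeff (d - 1))))).coeff (d - 1) = f.coeff (d - 1) ∧
    (f.comp (Polynomial.X + Polynomial.C (-(f.coeff (d - 2)) / (((d - 1 : ℕ) : K) * f.coeff (d - 1))))).coeff (d - 2) = 0 := by
  obtain ⟨k, rfl⟩ : ∃ k, d = k + 2 := ⟨d - 2, by omega⟩
  simp only [show k + 2 - 1 = k + 1 by omega, show k + 2 - 2 = k by omega] at hc ⊢
  rw [← taylor_apply]
  have hdK : ((k + 2 : ℕ) : K) = 0 := (CharP.cast_eq_zero_iff K p _).mpr hpd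
  have hk : ((k + 1 : ℕ) : K) = -1 := by
    rw [← add_neg_eq_zero, ← hdK]; push_cast; ring
  have : NeZero (2 : K) := by
    simpa using NeZero.of_not_dvd K (p := p) (n := 2)
      fun h ↦ hp ((Nat.prime_dvd_prime_iff_eq Fact.out Nat.prime_two).mp h)
  have hchoose : ((k + 2).choose 2 : K) = 0 := by
    rw [Nat.cast_choose_two, hdK, zero_mul, zero_div]
  refine ⟨by rw [natDegree_taylor, hd], hd ▸ coeff_taylor_natDegree _ _, ?_,
    coeff_taylor_eq_zero_of_choose_two_eq_zero f hd hchoose (by simpa [hk] using hc)⟩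
  rw [coeff_taylor_of_natDegree_eq_add_one f _ hd, hdK, zero_mul, zero_mul, add_zero]
end

section
/- Let F be a finite field, let E be a finite field extension of F of degree e, and let f be a nonzero squarefree polynomial over F. Then the number of roots of f in E equals the sum of the degrees of those monic irreducible factors of f (over F) whose degree divides e: #{x ∈ E : f(x) = 0} = Σ_{g monic irreducible, g ∣ f, deg g ∣ e} deg g. -/
/-!
Group the roots of `f` in `E` by their minimal polynomial over `F`. The minimal polynomial of a
root is a monic irreducible divisor of `f` whose degree `[F(x) : F]` divides `e`; conversely every
monic irreducible `g` with `deg g ∣ e` has a root in `E`, because `F[X]/(g)` embeds into `E`.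
Since `E/F` is Galois, the roots of `g` in `E` are the `deg g` distinct conjugates of that root.
-/

open Polynomial

section Galois

variable {K L : Type*} [Field K] [Field L] [Algebra K L]

theorem natCard_minpoly_fiber [Normal K L] [Algebra.IsSeparable K L] (x : L) :
    Nat.card {y : L // minpoly K y = minpoly K x} = (minpoly K x).natDegree := by
  have hx : IsIntegral K x := Algebra.IsIntegral.isIntegral x
  have hfiber : {y : L | minpoly K y = minpoly K x} = (minpoly K x).rootSet L := by
    ext y
    rw [Set.mem_ofPred_eq, eq_comm, minpoly.eq_iff_aeval_minpoly_eq_zero hx,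
      mem_rootSet_of_ne (minpoly.ne_zero hx)]
  rw [← Set.coe_ofPred, hfiber, Nat.card_eq_fintype_card,
    card_rootSet_eq_natDegree (Algebra.IsSeparable.isSeparable K x) (Normal.splits' x)]

theorem natCard_roots_eq_finsum_natDegree_minpoly [IsGalois K L] [Finite L] (f : K[X]) :
    Nat.card {x : L // aeval x f = 0} =
      ∑ᶠ g ∈ minpoly K '' {x : L | aeval x f = 0}, g.natDegree := by
  classical
  have := Fintype.ofFinite L
  set roots := Finset.univ.filter fun x : L ↦ aeval x f = 0
  -- Roots of `f` are closed under conjugation, so each fibre of `minpoly` on them is a full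
  -- conjugacy class.
  have hfiber : ∀ x ∈ roots, {y ∈ roots | minpoly K y = minpoly K x} =
      Finset.univ.filter fun y ↦ minpoly K y = minpoly K x := by
    intro x hx
    ext y
    simp only [roots, Finset.mem_filter, Finset.mem_univ, true_and, and_iff_right_iff_imp] at hx ⊢
    intro hy
    rw [← minpoly.dvd_iff, hy, minpoly.dvd_iff, hx]
  rw [Nat.card_eq_fintype_card, Fintype.card_subtype, Finset.card_eq_sum_card_image (minpoly K),
    ← finsum_mem_coe_finset, Finset.coe_image, Finset.coe_filter_univ]
  refine finsum_mem_congr rfl ?_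
  rintro _ ⟨x, hx, rfl⟩
  rw [hfiber x (by simpa [roots] using hx), ← Fintype.card_subtype, ← Nat.card_eq_fintype_card,
    natCard_minpoly_fiber]

end Galois

section FiniteField

variable {F E : Type*} [Field F] [Field E] [Algebra F E] [Finite E]

theorem exists_minpoly_eq_iff {g : F[X]} :
    (∃ x : E, minpoly F x = g) ↔ g.Monic ∧ Irreducible g ∧ g.natDegree ∣ Module.finrank F E := by
  constructor
  · rintro ⟨x, rfl⟩
    have hx : IsIntegral F x := Algebra.IsIntegral.isIntegral x
    exact ⟨minpoly.monic hx, minpoly.irreducible hx, minpoly.degree_dvd hx⟩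
  · rintro ⟨hmonic, hirr, hdvd⟩
    have := Fact.mk hirr
    have hrank : Module.finrank F (AdjoinRoot g) = g.natDegree :=
      (AdjoinRoot.powerBasis hirr.ne_zero).finrank
    obtain ⟨φ⟩ := FiniteField.nonempty_algHom_of_finrank_dvd (L := E) (hrank ▸ hdvd)
    refine ⟨φ (AdjoinRoot.root g), (minpoly.eq_of_irreducible_of_monic hirr ?_ hmonic).symm⟩
    rw [aeval_algHom_apply, AdjoinRoot.aeval_eq, AdjoinRoot.mk_self, map_zero]

theorem image_minpoly_setOf_aeval_eq_zero (f : F[X]) :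
    minpoly F '' {x : E | aeval x f = 0} =
      {g : F[X] | g.Monic ∧ Irreducible g ∧ g ∣ f ∧ g.natDegree ∣ Module.finrank F E} := by
  ext g
  simp only [Set.mem_image, Set.mem_ofPred_eq, ← minpoly.dvd_iff]
  constructor
  · rintro ⟨x, hdvd, hx⟩
    obtain ⟨hmonic, hirr, hdeg⟩ := exists_minpoly_eq_iff.mp ⟨x, hx⟩
    exact ⟨hmonic, hirr, hx ▸ hdvd, hdeg⟩
  · rintro ⟨hmonic, hirr, hdvd, hdeg⟩
    obtain ⟨x, rfl⟩ := exists_minpoly_eq_iff.mpr ⟨hmonic, hirr, hdeg⟩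
    exact ⟨x, hdvd, rfl⟩

end FiniteField

theorem card_roots_squarefree_in_extension_general
    (F : Type*) [Field F]
    (E : Type*) [Field E] [Fintype E] [Algebra F E]
    (e : ℕ) (he : Module.finrank F E = e)
    (f : Polynomial F) :
    Nat.card {x : E // Polynomial.aeval x f = 0} =
      ∑ᶠ g ∈ {g : Polynomial F | g.Monic ∧ Irreducible g ∧ g ∣ f ∧ g.natDegree ∣ e},
        g.natDegree := by
  rw [natCard_roots_eq_finsum_natDegree_minpoly, image_minpoly_setOf_aeval_eq_zero, he]

/-- Let `F` be a finite field and `E` a finite extension of `F` of degree `e`. For a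
nonzero squarefree polynomial `f` over `F`, the number of roots of `f` in `E` equals
the sum of the degrees of the monic irreducible factors of `f` whose degree divides `e`. -/
theorem card_roots_squarefree_in_extension
    (F : Type*) [Field F] [Fintype F]
    (E : Type*) [Field E] [Fintype E] [Algebra F E]
    (e : ℕ) (he : Module.finrank F E = e)
    (f : Polynomial F) (hf0 : f ≠ 0) (hf : Squarefree f) :
    Nat.card {x : E // Polynomial.aeval x f = 0} =
      ∑ᶠ g ∈ {g : Polynomial F | g.Monic ∧ Irreducible g ∧ g ∣ f ∧ g.natDegree ∣ e},
        g.natDegree :=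
  card_roots_squarefree_in_extension_general F E e he f
end
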